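/- arXiv:2503.10897 — 7 statements merged into one kernel-verified Lean document; each statement's English description precedes it below -/
import Mathlib

section
/- Let a : Fin n → ℝ and let u : Fin n → Fin n → ℝ be symmetric (u i j = u j i). Define the skew-symmetric matrix M i j = (a i − a j) * u i j. Then rank M ≤ 2 if and only if for all indices i, j, k, l one has (a k − a j)(a l − a i) u j k * u i l + (a i − a k)(a l − a j) u i k * u j l + (a j − a i)(a l − a k) u i j * u k l = 0. -/
open Matrix

set_option maxHeartbeats 1000000 in
private lemma det_fin_four' (A : Matrix (Fin 4) (Fin 4) ℝ) :
    A.det =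
      A 0 0 * (A 1 1 * A 2 2 * A 3 3 - A 1 1 * A 2 3 * A 3 2 - A 1 2 * A 2 1 * A 3 3
        + A 1 2 * A 2 3 * A 3 1 + A 1 3 * A 2 1 * A 3 2 - A 1 3 * A 2 2 * A 3 1)
      - A 0 1 * (A 1 0 * A 2 2 * A 3 3 - A 1 0 * A 2 3 * A 3 2 - A 1 2 * A 2 0 * A 3 3
        + A 1 2 * A 2 3 * A 3 0 + A 1 3 * A 2 0 * A 3 2 - A 1 3 * A 2 2 * A 3 0)
      + A 0 2 * (A 1 0 * A 2 1 * A 3 3 - A 1 0 * A 2 3 * A 3 1 - A 1 1 * A 2 0 * A 3 3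
        + A 1 1 * A 2 3 * A 3 0 + A 1 3 * A 2 0 * A 3 1 - A 1 3 * A 2 1 * A 3 0)
      - A 0 3 * (A 1 0 * A 2 1 * A 3 2 - A 1 0 * A 2 2 * A 3 1 - A 1 1 * A 2 0 * A 3 2
        + A 1 1 * A 2 2 * A 3 0 + A 1 2 * A 2 0 * A 3 1 - A 1 2 * A 2 1 * A 3 0) := by
  rw [Matrix.det_succ_row_zero, Fin.sum_univ_four]
  rw [Matrix.det_fin_three, Matrix.det_fin_three, Matrix.det_fin_three, Matrix.det_fin_three]
  simp only [submatrix_apply]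
  norm_num [Fin.succAbove, Fin.lt_def]
  simp only [show (Fin.succ 2 : Fin 4) = 3 from rfl, show ((3:Fin 4):ℕ) = 3 from rfl,
    show (Fin.castSucc 2 : Fin 4) = 2 from rfl]
  norm_num
  ring

/-- Determinant of a 4×4 skew-symmetric matrix is the square of its Pfaffian. -/
private lemma det_eq_pf_sq (S : Matrix (Fin 4) (Fin 4) ℝ) (hs : ∀ i j, S j i = -S i j) :
    S.det = (S 0 1 * S 2 3 - S 0 2 * S 1 3 + S 0 3 * S 1 2) ^ 2 := by
  have d0 : S 0 0 = 0 := by have := hs 0 0; linarith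
  have d1 : S 1 1 = 0 := by have := hs 1 1; linarith
  have d2 : S 2 2 = 0 := by have := hs 2 2; linarith
  have d3 : S 3 3 = 0 := by have := hs 3 3; linarith
  rw [det_fin_four', d0, d1, d2, d3, hs 0 1, hs 0 2, hs 0 3, hs 1 2, hs 1 3, hs 2 3]
  ring

private lemma plucker_of_rank_le_two {n : ℕ} (M : Matrix (Fin n) (Fin n) ℝ)
    (hskew : ∀ i j, M j i = -M i j) (hr : M.rank ≤ 2) (i j k l : Fin n) :
    M i j * M k l - M i k * M j l + M i l * M j k = 0 := by
  classical
  set g : Fin 4 → Fin n := ![i, j, k, l] with hg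
  set P : Matrix (Fin 4) (Fin n) ℝ := Matrix.of fun r c => if g r = c then (1 : ℝ) else 0 with hP
  set S : Matrix (Fin 4) (Fin 4) ℝ := M.submatrix g g with hSdef
  have hPM : P * M = Matrix.of fun r c => M (g r) c := by
    ext r c
    simp [hP, Matrix.mul_apply]
  have hS : S = P * M * Pᵀ := by
    ext r c
    simp [hSdef, hPM, Matrix.mul_apply, hP, mul_comm]
  have hrankS : S.rank ≤ 2 := by
    rw [hS]
    exact le_trans (Matrix.rank_mul_le_left _ _) (le_trans (Matrix.rank_mul_le_right _ _) hr)
  have hdet : S.det = 0 := by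
    by_contra hne
    have hunit : IsUnit S := (Matrix.isUnit_iff_isUnit_det S).mpr (isUnit_iff_ne_zero.mpr hne)
    have := Matrix.rank_of_isUnit S hunit
    rw [this] at hrankS
    simp at hrankS
  have hsS : ∀ r c : Fin 4, S c r = -S r c := fun r c => hskew (g r) (g c)
  have hpf : (S 0 1 * S 2 3 - S 0 2 * S 1 3 + S 0 3 * S 1 2) ^ 2 = 0 := by
    rw [← det_eq_pf_sq S hsS, hdet]
  have hpf0 : S 0 1 * S 2 3 - S 0 2 * S 1 3 + S 0 3 * S 1 2 = 0 :=
    pow_eq_zero_iff (two_ne_zero) |>.mp hpf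
  have e01 : S 0 1 = M i j := rfl
  have e23 : S 2 3 = M k l := rfl
  have e02 : S 0 2 = M i k := rfl
  have e13 : S 1 3 = M j l := rfl
  have e03 : S 0 3 = M i l := rfl
  have e12 : S 1 2 = M j k := rfl
  rw [e01, e23, e02, e13, e03, e12] at hpf0
  exact hpf0

set_option maxHeartbeats 1000000 in
private lemma rank_le_two_of_plucker {n : ℕ} (M : Matrix (Fin n) (Fin n) ℝ)
    (h : ∀ i j k l : Fin n, M i j * M k l - M i k * M j l + M i l * M j k = 0) :
    M.rank ≤ 2 := by
  classical
  by_cases hz : ∀ p q, M p q = 0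
  · have : M = 0 := by ext p q; exact hz p q
    rw [this, Matrix.rank_zero]
    norm_num
  · push_neg at hz
    obtain ⟨p, q, hpq⟩ := hz
    rw [Matrix.rank, Matrix.range_mulVecLin]
    have hsub : Set.range Mᵀ ⊆
        (Submodule.span ℝ (Set.range ![Mᵀ p, Mᵀ q]) : Submodule ℝ (Fin n → ℝ)) := by
      rintro _ ⟨y, rfl⟩
      have hcol : Mᵀ y = (M p y / M p q) • Mᵀ q - (M q y / M p q) • Mᵀ p := by
        funext x
        have hx := h x p q y
        simp only [Pi.sub_apply, Pi.smul_apply, Matrix.transpose_apply, smul_eq_mul]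
        field_simp
        linarith [hx]
      rw [hcol]
      have hmq : Mᵀ q ∈ Submodule.span ℝ (Set.range ![Mᵀ p, Mᵀ q]) :=
        Submodule.subset_span ⟨1, rfl⟩
      have hmp : Mᵀ p ∈ Submodule.span ℝ (Set.range ![Mᵀ p, Mᵀ q]) :=
        Submodule.subset_span ⟨0, rfl⟩
      exact Submodule.sub_mem _ (Submodule.smul_mem _ _ hmq) (Submodule.smul_mem _ _ hmp)
    have h1 : Module.finrank ℝ (Submodule.span ℝ (Set.range Mᵀ))
        ≤ Module.finrank ℝ (Submodule.span ℝ (Set.range ![Mᵀ p, Mᵀ q])) :=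
      Submodule.finrank_mono (Submodule.span_le.mpr hsub)
    have h2 : Module.finrank ℝ (Submodule.span ℝ (Set.range ![Mᵀ p, Mᵀ q])) ≤ 2 := by
      have := finrank_range_le_card (R := ℝ) ![Mᵀ p, Mᵀ q]
      simpa [Set.finrank] using this
    exact le_trans h1 h2

/-- The general heavenly system is equivalent to the requirement that the
skew-symmetric matrix `{(a i - a j) * u i j}` has rank at most two. -/
theorem stmt_2 (n : ℕ) (a : Fin n → ℝ) (u : Fin n → Fin n → ℝ)
    (hu : ∀ i j, u i j = u j i) :
    (Matrix.of fun i j : Fin n => (a i - a j) * u i j).rank ≤ 2 ↔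
      ∀ i j k l : Fin n,
        (a k - a j) * (a l - a i) * (u j k * u i l)
        + (a i - a k) * (a l - a j) * (u i k * u j l)
        + (a j - a i) * (a l - a k) * (u i j * u k l) = 0 := by
  set M : Matrix (Fin n) (Fin n) ℝ :=
    Matrix.of fun i j : Fin n => (a i - a j) * u i j with hM
  have hskew : ∀ i j, M j i = -M i j := by
    intro i j
    simp only [hM, Matrix.of_apply]
    rw [hu j i]
    ring
  constructor
  · intro hr i j k l
    have hE := plucker_of_rank_le_two M hskew hr i j k l
    simp only [hM, Matrix.of_apply] at hE
    nlinarith [hE]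
  · intro h
    apply rank_le_two_of_plucker M
    intro i j k l
    have hG := h i j k l
    simp only [hM, Matrix.of_apply]
    nlinarith [hG]
end

section
/- Let a : Fin n → ℝ, let u : Fin n → Fin n → ℝ be symmetric, and let p : Fin n → ℝ. Assume u satisfies the general heavenly equations: for all i, j, k, l, (a k − a j)(a l − a i) u j k * u i l + (a i − a k)(a l − a j) u i k * u j l + (a j − a i)(a l − a k) u i j * u k l = 0. Then the characteristic equations (a k − a j)(a l − a i)(u j k * p i * p l + u i l * p j * p k) + (a i − a k)(a l − a j)(u i k * p j * p l + u j l * p i * p k) + (a j − a i)(a l − a k)(u i j * p k * p l + u k l * p i * p j) = 0 hold for all i, j, k, l if and only if the skew-symmetric matrix N i j = (a i − a j)(u i j + p i * p j) has rank at most 2. -/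
/-!
With `N i j = (a i - a j) * (u i j + p i * p j)`, the `4 × 4` Pfaffian
`N i j * N k l - N i k * N j l + N i l * N j k` expands into the heavenly expression (quadratic
in `u`) plus the characteristic expression (bilinear in `u` and `p p`); the terms quartic in `p`
cancel. On a solution the characteristic equations therefore say that all `4 × 4` Pfaffians of
the skew-symmetric matrix `N` vanish, which is the classical criterion for `rank N ≤ 2`: a
principal `4 × 4` minor of `N` is the square of its Pfaffian, and conversely a nonzero entry
`N i j` lets one solve the Pfaffian relations for `N k l`, exhibiting `N` as a product through `R²`.
-/

namespace Matrix

variable {ι R : Type*}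

def pfaffianMinor [CommRing R] (N : Matrix ι ι R) (i j k l : ι) : R :=
  N i j * N k l - N i k * N j l + N i l * N j k

theorem det_submatrix_eq_pfaffianMinor_sq [CommRing R] {N : Matrix ι ι R}
    (hskew : ∀ i j, N j i = -N i j) (hdiag : ∀ i, N i i = 0) (i j k l : ι) :
    (N.submatrix ![i, j, k, l] ![i, j, k, l]).det = N.pfaffianMinor i j k l ^ 2 := by
  have hsub : N.submatrix ![i, j, k, l] ![i, j, k, l] =
      !![0, N i j, N i k, N i l; -N i j, 0, N j k, N j l;
        -N i k, -N j k, 0, N k l; -N i l, -N j l, -N k l, 0] := by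
    ext r c
    fin_cases r <;> fin_cases c <;>
      simp [hdiag, hskew i j, hskew i k, hskew i l, hskew j k, hskew j l, hskew k l]
  rw [hsub, det_succ_row_zero]
  simp [Fin.sum_univ_succ, det_fin_three, Fin.succAbove, pfaffianMinor]
  ring

theorem pfaffianMinor_eq_zero_of_rank_le_two [Fintype ι] [CommRing R] [IsDomain R]
    {N : Matrix ι ι R} (hskew : ∀ i j, N j i = -N i j) (hdiag : ∀ i, N i i = 0)
    (hrank : N.rank ≤ 2) (i j k l : ι) : N.pfaffianMinor i j k l = 0 := by
  by_contra hpf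
  have hdet : (N.submatrix ![i, j, k, l] ![i, j, k, l]).det ≠ 0 := by
    rw [det_submatrix_eq_pfaffianMinor_sq hskew hdiag]
    exact pow_ne_zero 2 hpf
  have := (rank_of_det_ne_zero hdet).symm.trans_le ((rank_submatrix_le _ _ _).trans hrank)
  simp at this

theorem rank_le_two_of_pfaffianMinor_eq_zero [Fintype ι] [Field R] {N : Matrix ι ι R}
    (hpf : ∀ i j k l, N.pfaffianMinor i j k l = 0) : N.rank ≤ 2 := by
  by_cases hN : N = 0
  · simp [hN]
  obtain ⟨i, j, hc⟩ : ∃ i j, N i j ≠ 0 := by simpa [← Matrix.ext_iff] using hN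
  have hfactor : N = of (fun k (t : Fin 2) => ![N i k / N i j, -N j k] t) *
      of (fun (t : Fin 2) l => ![N j l, N i l / N i j] t) := by
    ext k l
    simp only [mul_apply, Fin.sum_univ_two, of_apply, cons_val_zero, cons_val_one]
    have hkl := hpf i j k l
    rw [pfaffianMinor] at hkl
    field_simp
    linear_combination hkl
  rw [hfactor]
  exact (rank_mul_le_right _ _).trans ((rank_le_card_height _).trans (by simp))

theorem rank_le_two_iff_pfaffianMinor_eq_zero [Fintype ι] [Field R] {N : Matrix ι ι R}
    (hskew : ∀ i j, N j i = -N i j) (hdiag : ∀ i, N i i = 0) :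
    N.rank ≤ 2 ↔ ∀ i j k l, N.pfaffianMinor i j k l = 0 :=
  ⟨pfaffianMinor_eq_zero_of_rank_le_two hskew hdiag, rank_le_two_of_pfaffianMinor_eq_zero⟩

theorem pfaffianMinor_of_sub_mul_add_mul [CommRing R] (a : ι → R) (u : ι → ι → R) (p : ι → R)
    (i j k l : ι) :
    (of fun i j => (a i - a j) * (u i j + p i * p j)).pfaffianMinor i j k l =
      ((a k - a j) * (a l - a i) * (u j k * u i l)
        + (a i - a k) * (a l - a j) * (u i k * u j l)
        + (a j - a i) * (a l - a k) * (u i j * u k l))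
      + ((a k - a j) * (a l - a i) * (u j k * p i * p l + u i l * p j * p k)
        + (a i - a k) * (a l - a j) * (u i k * p j * p l + u j l * p i * p k)
        + (a j - a i) * (a l - a k) * (u i j * p k * p l + u k l * p i * p j)) := by
  simp only [pfaffianMinor, of_apply]
  ring

end Matrix

/-- On a solution of the general heavenly system, the characteristic equations
are equivalent to the requirement that the skew-symmetric matrix
`{(a i - a j) * (u i j + p i * p j)}` has rank at most two. -/
theorem stmt_3 (n : ℕ) (a : Fin n → ℝ) (u : Fin n → Fin n → ℝ) (p : Fin n → ℝ)
    (hu : ∀ i j, u i j = u j i)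
    (hgh : ∀ i j k l : Fin n,
        (a k - a j) * (a l - a i) * (u j k * u i l)
        + (a i - a k) * (a l - a j) * (u i k * u j l)
        + (a j - a i) * (a l - a k) * (u i j * u k l) = 0) :
    (∀ i j k l : Fin n,
        (a k - a j) * (a l - a i) * (u j k * p i * p l + u i l * p j * p k)
        + (a i - a k) * (a l - a j) * (u i k * p j * p l + u j l * p i * p k)
        + (a j - a i) * (a l - a k) * (u i j * p k * p l + u k l * p i * p j) = 0)
      ↔ (Matrix.of fun i j : Fin n => (a i - a j) * (u i j + p i * p j)).rank ≤ 2 := by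
  set N : Matrix (Fin n) (Fin n) ℝ := .of fun i j => (a i - a j) * (u i j + p i * p j)
  have hskew : ∀ i j, N j i = -N i j := fun i j => by
    simp only [N, Matrix.of_apply, hu j i]
    ring
  have hdiag : ∀ i, N i i = 0 := fun i => by simp [N]
  rw [Matrix.rank_le_two_iff_pfaffianMinor_eq_zero hskew hdiag]
  refine forall₄_congr fun i j k l => ?_
  rw [Matrix.pfaffianMinor_of_sub_mul_add_mul, hgh, zero_add]
end

section
/- Let a₁, a₂, a₃ be pairwise distinct real numbers, λ ∈ ℝ with λ ≠ a₁, a₂, a₃, and r₁, r₂, r₃, s₁, s₂, s₃ ∈ ℝ. Define u_{pq} = (r_p s_q − r_q s_p)/(a_p − a_q) for p ≠ q. Then (1/(λ−a₁) − 1/(λ−a₂)) u_{12} · r₃/(λ−a₃) + (1/(λ−a₂) − 1/(λ−a₃)) u_{23} · r₁/(λ−a₁) + (1/(λ−a₃) − 1/(λ−a₁)) u_{13} · r₂/(λ−a₂) = 0, and the same identity holds with r₁, r₂, r₃ replaced by s₁, s₂, s₃. -/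
/-- The 1-forms `r = Σ rᵢ/(λ - aᵢ) dxⁱ` and `s = Σ sᵢ/(λ - aᵢ) dxⁱ` annihilate the
Lax vector fields `U₁₂₃` of the general heavenly hierarchy, where
`u_{pq} = (r_p s_q - r_q s_p)/(a_p - a_q)`. -/
theorem stmt_4 (a₁ a₂ a₃ l r₁ r₂ r₃ s₁ s₂ s₃ : ℝ)
    (h12 : a₁ ≠ a₂) (h13 : a₁ ≠ a₃) (h23 : a₂ ≠ a₃)
    (hl1 : l ≠ a₁) (hl2 : l ≠ a₂) (hl3 : l ≠ a₃) :
    (1/(l - a₁) - 1/(l - a₂)) * ((r₁*s₂ - r₂*s₁)/(a₁ - a₂)) * (r₃/(l - a₃))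
    + (1/(l - a₂) - 1/(l - a₃)) * ((r₂*s₃ - r₃*s₂)/(a₂ - a₃)) * (r₁/(l - a₁))
    + (1/(l - a₃) - 1/(l - a₁)) * ((r₁*s₃ - r₃*s₁)/(a₁ - a₃)) * (r₂/(l - a₂)) = 0
    ∧
    (1/(l - a₁) - 1/(l - a₂)) * ((r₁*s₂ - r₂*s₁)/(a₁ - a₂)) * (s₃/(l - a₃))
    + (1/(l - a₂) - 1/(l - a₃)) * ((r₂*s₃ - r₃*s₂)/(a₂ - a₃)) * (s₁/(l - a₁))
    + (1/(l - a₃) - 1/(l - a₁)) * ((r₁*s₃ - r₃*s₁)/(a₁ - a₃)) * (s₂/(l - a₂)) = 0 := by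
  have d12 : a₁ - a₂ ≠ 0 := sub_ne_zero.mpr h12
  have d13 : a₁ - a₃ ≠ 0 := sub_ne_zero.mpr h13
  have d23 : a₂ - a₃ ≠ 0 := sub_ne_zero.mpr h23
  have e1 : l - a₁ ≠ 0 := sub_ne_zero.mpr hl1
  have e2 : l - a₂ ≠ 0 := sub_ne_zero.mpr hl2
  have e3 : l - a₃ ≠ 0 := sub_ne_zero.mpr hl3
  constructor <;> (field_simp; ring)
end

section
/- Let Ω ⊆ ℝ^(n+1) be open, let a : Fin (n+1) → ℝ be pairwise distinct constants, and let u : Ω → ℝ be smooth satisfying the general heavenly hierarchy: for every quadruple of distinct indices i, j, k, l, (a k − a j)(a l − a i) u_{jk} u_{il} + (a i − a k)(a l − a j) u_{ik} u_{jl} + (a j − a i)(a l − a k) u_{ij} u_{kl} = 0 on Ω. Fix λ ∈ ℝ not equal to any a m, and for distinct i, j, k define the vector field U_{ijk} : Ω → ℝ^(n+1) whose ∂_k-component is (1/(λ−a i) − 1/(λ−a j)) u_{ij}, whose ∂_i-component is (1/(λ−a j) − 1/(λ−a k)) u_{jk}, whose ∂_j-component is (1/(λ−a k) − 1/(λ−a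 i)) u_{ik}, and whose other components vanish. Then for any two triples of distinct indices (i,j,k) and (p,q,r) and any point x ∈ Ω, the Lie bracket [U_{ijk}, U_{pqr}](x) lies in the linear span of { U_{abc}(x) : (a,b,c) a triple of distinct indices }. -/
/-- The `i`-th standard coordinate (basis) vector of `ℝᵐ`. -/
noncomputable def e (m : ℕ) (i : Fin m) : Fin m → ℝ := Pi.single i 1

/-- Partial derivative `∂f/∂xⁱ` of a scalar function on `ℝᵐ`. -/
noncomputable def pd (m : ℕ) (f : (Fin m → ℝ) → ℝ) (i : Fin m) (x : Fin m → ℝ) : ℝ :=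
  fderiv ℝ f x (e m i)

/-- Second partial derivative `∂²f/∂xⁱ∂xʲ`. -/
noncomputable def pd2 (m : ℕ) (f : (Fin m → ℝ) → ℝ) (i j : Fin m) (x : Fin m → ℝ) : ℝ :=
  pd m (fun y => pd m f i y) j x

/-- Lie bracket of vector fields on (an open subset of) `ℝᵐ`:
`[X,Y](x) = DY(x)·X(x) − DX(x)·Y(x)`. -/
noncomputable def vbr (m : ℕ) (X Y : (Fin m → ℝ) → (Fin m → ℝ)) (x : Fin m → ℝ) :
    Fin m → ℝ :=
  fderiv ℝ Y x (X x) - fderiv ℝ X x (Y x)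

/-- The Lax vector field `U_{ijk}` of the general heavenly hierarchy:
`∂ₖ`-component `(1/(λ-aᵢ) - 1/(λ-aⱼ)) u_{ij}`, `∂ᵢ`-component
`(1/(λ-aⱼ) - 1/(λ-aₖ)) u_{jk}`, `∂ⱼ`-component `(1/(λ-aₖ) - 1/(λ-aᵢ)) u_{ik}`. -/
noncomputable def Ufield (n : ℕ) (a : Fin (n+1) → ℝ) (lam : ℝ)
    (u : (Fin (n+1) → ℝ) → ℝ) (i j k : Fin (n+1)) (x : Fin (n+1) → ℝ) :
    Fin (n+1) → ℝ :=
  ((1/(lam - a i) - 1/(lam - a j)) * pd2 (n+1) u i j x) • e (n+1) k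
  + ((1/(lam - a j) - 1/(lam - a k)) * pd2 (n+1) u j k x) • e (n+1) i
  + ((1/(lam - a k) - 1/(lam - a i)) * pd2 (n+1) u i k x) • e (n+1) j

/-!
With `g_{st} = (1/(λ - a_s) - 1/(λ - a_t)) u_{st}`, the Lax field is
`U_{ijk} = g_{ij} e_k + g_{jk} e_i + g_{ki} e_j`, and `g_{st} = ω(e_s, e_t)` for the exact 2-form
`ω = dα`, `α = Σ_s u_s dx^s / (a_s - λ)`. Up to a nonzero factor, the heavenly equations are the
Plücker relations `g_{ij} g_{kl} + g_{jk} g_{il} + g_{ki} g_{jl} = 0`, which put every `U_{ijk}` in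
the kernel of `ω`. The kernel of a closed 2-form is involutive, so `[U_{ijk}, U_{pqr}](x)` lies
in the kernel of `ω(x)`. Finally, if `g_{bc}(x) ≠ 0`, every `w` in that kernel satisfies
`g_{bc} w = Σ_d w_d U_{bcd}`; if `ω(x) = 0`, all the `U_{ijk}` vanish at `x`, and so does the
bracket.
-/

open Filter Topology VectorField

section ClosedTwoForm

variable {𝕜 E F : Type*} [NontriviallyNormedField 𝕜] [NormedAddCommGroup E] [NormedSpace 𝕜 E]
  [NormedAddCommGroup F] [NormedSpace 𝕜 F]

theorem ContinuousAlternatingMap.map_vecCons_two_swap (f : E [⋀^Fin 2]→L[𝕜] F) (v w : E) :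
    f ![w, v] = -f ![v, w] := by
  have hswap : ![w, v] = ![v, w] ∘ Equiv.swap 0 1 := by
    ext i; fin_cases i <;> rfl
  rw [hswap]
  exact f.toAlternatingMap.map_swap _ (by decide)

@[simp]
theorem ContinuousAlternatingMap.map_vecCons_two_self (f : E [⋀^Fin 2]→L[𝕜] F) (v : E) :
    f ![v, v] = 0 :=
  f.map_eq_zero_of_eq ![v, v] (i := 0) (j := 1) rfl (by decide)

theorem differentiableAt_extDeriv {n : ℕ} {ω : E → E [⋀^Fin n]→L[𝕜] F} {x : E}
    (hω : ContDiffAt 𝕜 2 ω x) : DifferentiableAt 𝕜 (extDeriv ω) x := by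
  have hdω := (hω.fderiv_right (m := 1) (by norm_num)).differentiableAt one_ne_zero
  have hcomp : extDeriv ω =
      ContinuousAlternatingMap.alternatizeUncurryFinCLM 𝕜 E F ∘ fderiv 𝕜 ω := by
    funext y
    simp [extDeriv, ContinuousAlternatingMap.alternatizeUncurryFinCLM_apply]
  rw [hcomp]
  exact (ContinuousLinearMap.differentiableAt _).comp x hdω

/-- In
`dω(X, Y, v) = X ω(Y, v) - Y ω(X, v) + v ω(X, Y) - ω([X, Y], v) + ω([X, v], Y) - ω([Y, v], X)`
every term but `ω([X, Y], v)` vanishes when `X` and `Y` lie in the kernel of `ω`. -/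
theorem map_lieBracket_vecCons_eq_zero_of_extDeriv_eq_zero {ω : E → E [⋀^Fin 2]→L[𝕜] F}
    {X Y : E → E} {x : E} (hω : DifferentiableAt 𝕜 ω x) (hdω : extDeriv ω x = 0)
    (hX : DifferentiableAt 𝕜 X x) (hY : DifferentiableAt 𝕜 Y x)
    (hXω : ∀ᶠ y in 𝓝 x, ∀ v, ω y ![X y, v] = 0) (hYω : ∀ᶠ y in 𝓝 x, ∀ v, ω y ![Y y, v] = 0)
    (v : E) : ω x ![lieBracket 𝕜 X Y x, v] = 0 := by
  have key := extDeriv_apply_vectorField (V := ![X, Y, fun _ => v]) hω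
    (by intro i; fin_cases i <;> simp [hX, hY])
  have hV : ∀ y, (fun k => ![X, Y, fun _ => v] k y) = ![X y, Y y, v] := by
    intro y; ext k; fin_cases k <;> rfl
  have hremove₁ : ∀ a b c : E, Fin.removeNth (1 : Fin 3) ![a, b, c] = ![a, c] := by
    intros; ext k; fin_cases k <;> rfl
  have hremove₂ : ∀ a b c : E, Fin.removeNth (2 : Fin 3) ![a, b, c] = ![a, b] := by
    intros; ext k; fin_cases k <;> rfl
  have hremove₃ : ∀ a b : E, Fin.removeNth (1 : Fin 2) ![a, b] = ![a] := by
    intros; ext k; fin_cases k; rfl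
  have hIci : Finset.Ici (1 : Fin 2) = {1} := by decide
  rw [hdω] at key
  simp only [hV, Fin.sum_univ_succ, Fin.sum_univ_zero] at key
  simp [hremove₁, hremove₂, hremove₃, hIci, Fin.sum_univ_succ] at key
  have fderiv_eq_zero : ∀ {f : E → F}, f =ᶠ[𝓝 x] 0 → fderiv 𝕜 f x = 0 := fun hf => by
    rw [hf.fderiv_eq]; exact fderiv_const_apply 0
  rw [fderiv_eq_zero (hYω.mono fun y hy => hy v), fderiv_eq_zero (hXω.mono fun y hy => hy v),
    fderiv_eq_zero (hXω.mono fun y hy => hy (Y y)), (ω x).map_vecCons_two_swap (Y x),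
    (ω x).map_vecCons_two_swap (X x), hYω.self_of_nhds, hXω.self_of_nhds] at key
  simpa using key.symm

end ClosedTwoForm

section LaxOneForm

variable {E : Type*} [NormedAddCommGroup E] [NormedSpace ℝ E]

noncomputable def laxOneForm (C : E →L[ℝ] E) (u : E → ℝ) (y : E) : E [⋀^Fin 1]→L[ℝ] ℝ :=
  ContinuousAlternatingMap.ofSubsingletonLIE (0 : Fin 1) ((fderiv ℝ u y).comp C)

theorem contDiffAt_laxOneForm {C : E →L[ℝ] E} {u : E → ℝ} {x : E} {r : ℕ}
    (hu : ContDiffAt ℝ (r + 1) u x) : ContDiffAt ℝ r (laxOneForm C u) x := by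
  unfold laxOneForm
  exact (ContinuousAlternatingMap.ofSubsingletonLIE (0 : Fin 1)).contDiff.comp_contDiffAt x
    ((hu.fderiv_right le_rfl).clm_comp (contDiffAt_const (c := C)))

theorem extDeriv_laxOneForm_apply {C : E →L[ℝ] E} {u : E → ℝ} {y : E}
    (hu : DifferentiableAt ℝ (fderiv ℝ u) y) (v w : E) :
    extDeriv (laxOneForm C u) y ![v, w] =
      fderiv ℝ (fderiv ℝ u) y v (C w) - fderiv ℝ (fderiv ℝ u) y w (C v) := by
  have hα : DifferentiableAt ℝ (laxOneForm C u) y := by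
    unfold laxOneForm
    exact ((ContinuousAlternatingMap.ofSubsingletonLIE (0 : Fin 1)).differentiable _).comp y
      (hu.clm_comp (differentiableAt_const C))
  have hremove : Fin.removeNth (1 : Fin 2) ![v, w] 0 = v := rfl
  rw [extDeriv_apply hα]
  simp [Fin.sum_univ_two, laxOneForm, hremove, fderiv_clm_apply hu (differentiableAt_const _),
    sub_eq_add_neg]

end LaxOneForm

section CoordinateTwoForm

variable {ι : Type*} [Fintype ι] [DecidableEq ι]

namespace ContinuousAlternatingMap

variable {F : Type*} [NormedAddCommGroup F] [NormedSpace ℝ F] (f : (ι → ℝ) [⋀^Fin 2]→L[ℝ] F)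

theorem map_vecCons_two_eq_sum_left (v w : ι → ℝ) :
    f ![v, w] = ∑ s, v s • f ![Pi.single s 1, w] := by
  conv_lhs => rw [pi_eq_sum_univ' v]
  rw [← f.curryLeft_apply_apply, _root_.map_sum]
  simp [ContinuousAlternatingMap.sum_apply, f.curryLeft_apply_apply]

theorem map_vecCons_two_eq_sum_right (v w : ι → ℝ) :
    f ![v, w] = ∑ t, w t • f ![v, Pi.single t 1] := by
  rw [f.map_vecCons_two_swap w v, f.map_vecCons_two_eq_sum_left, ← Finset.sum_neg_distrib]
  refine Finset.sum_congr rfl fun t _ => ?_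
  rw [f.map_vecCons_two_swap v, smul_neg, neg_neg]

end ContinuousAlternatingMap

noncomputable def laxVector (f : (ι → ℝ) [⋀^Fin 2]→L[ℝ] ℝ) (i j k : ι) : ι → ℝ :=
  f ![Pi.single i 1, Pi.single j 1] • Pi.single k 1
    + f ![Pi.single j 1, Pi.single k 1] • Pi.single i 1
    + f ![Pi.single k 1, Pi.single i 1] • Pi.single j 1

noncomputable def plueckerSum (f : (ι → ℝ) [⋀^Fin 2]→L[ℝ] ℝ) (i j k l : ι) : ℝ :=
  f ![Pi.single i 1, Pi.single j 1] * f ![Pi.single k 1, Pi.single l 1]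
    + f ![Pi.single j 1, Pi.single k 1] * f ![Pi.single i 1, Pi.single l 1]
    + f ![Pi.single k 1, Pi.single i 1] * f ![Pi.single j 1, Pi.single l 1]

theorem map_vecCons_laxVector_eq_zero (f : (ι → ℝ) [⋀^Fin 2]→L[ℝ] ℝ)
    (hf : ∀ i j k l : ι, i ≠ j → i ≠ k → i ≠ l → j ≠ k → j ≠ l → k ≠ l → plueckerSum f i j k l = 0)
    (i j k : ι) (v : ι → ℝ) : f ![laxVector f i j k, v] = 0 := by
  have hswap : ∀ s t : ι,
      f ![Pi.single s 1, Pi.single t 1] = -f ![Pi.single t 1, Pi.single s 1] :=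
    fun s t => f.map_vecCons_two_swap _ _
  have hP : ∀ l, plueckerSum f i j k l = 0 := by
    intro l
    by_cases hij : i = j
    · subst hij; rw [plueckerSum, hswap k i]; simp
    by_cases hik : i = k
    · subst hik; rw [plueckerSum, hswap j i]; simp
    by_cases hil : i = l
    · subst hil; rw [plueckerSum, hswap j i]; simp; ring
    by_cases hjk : j = k
    · subst hjk; rw [plueckerSum, hswap j i]; simp
    by_cases hjl : j = l
    · subst hjl; rw [plueckerSum, hswap k j]; simp; ring
    by_cases hkl : k = l
    · subst hkl; rw [plueckerSum, hswap k i]; simp; ring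
    exact hf i j k l hij hik hil hjk hjl hkl
  simp only [plueckerSum] at hP
  simp only [laxVector, ContinuousAlternatingMap.vecCons_add,
    ContinuousAlternatingMap.vecCons_smul, f.map_vecCons_two_eq_sum_right (Pi.single _ 1) v,
    smul_eq_mul, Finset.mul_sum, ← Finset.sum_add_distrib]
  refine Finset.sum_eq_zero fun l _ => ?_
  linear_combination v l * hP l

theorem mem_span_laxVector (f : (ι → ℝ) [⋀^Fin 2]→L[ℝ] ℝ) {w : ι → ℝ}
    (hw : ∀ v, f ![w, v] = 0) {b c : ι} (hbc : f ![Pi.single b 1, Pi.single c 1] ≠ 0) :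
    w ∈ Submodule.span ℝ
      {y | ∃ b c d : ι, b ≠ c ∧ c ≠ d ∧ b ≠ d ∧ y = laxVector f b c d} := by
  have hne : b ≠ c := by
    rintro rfl
    simp at hbc
  have hdegenerate : ∀ d, d = b ∨ d = c → laxVector f b c d = 0 := by
    rintro d (rfl | rfl)
    · rw [laxVector, f.map_vecCons_two_swap (Pi.single d 1)]
      simp
    · rw [laxVector, f.map_vecCons_two_swap (Pi.single b 1)]
      simp
  have hexpand : f ![Pi.single b 1, Pi.single c 1] • w = ∑ d, w d • laxVector f b c d := by
    have hb : ∑ d, w d * f ![Pi.single d 1, Pi.single b 1] = 0 := by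
      rw [← hw (Pi.single b 1), f.map_vecCons_two_eq_sum_left]
      rfl
    have hc : ∑ d, w d * f ![Pi.single c 1, Pi.single d 1] = 0 := by
      rw [← neg_eq_zero, ← hw (Pi.single c 1), f.map_vecCons_two_swap,
        f.map_vecCons_two_eq_sum_right]
      rfl
    simp only [laxVector, smul_add, Finset.sum_add_distrib, smul_smul, ← Finset.sum_smul, hb, hc,
      zero_smul, add_zero]
    conv_lhs => rw [pi_eq_sum_univ' w, Finset.smul_sum]
    simp only [smul_smul, mul_comm]
  have hw' : w = (f ![Pi.single b 1, Pi.single c 1])⁻¹ • ∑ d, w d • laxVector f b c d := by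
    rw [← hexpand, inv_smul_smul₀ hbc]
  rw [hw']
  refine Submodule.smul_mem _ _ (Submodule.sum_mem _ fun d _ => Submodule.smul_mem _ _ ?_)
  by_cases hd : d = b ∨ d = c
  · rw [hdegenerate d hd]
    exact Submodule.zero_mem _
  · obtain ⟨hdb, hdc⟩ := not_or.mp hd
    exact Submodule.subset_span ⟨b, c, d, hne, Ne.symm hdc, Ne.symm hdb, rfl⟩

noncomputable def diagonalCLM (c : ι → ℝ) : (ι → ℝ) →L[ℝ] (ι → ℝ) :=
  ContinuousLinearMap.pi fun s => c s • ContinuousLinearMap.proj s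

theorem extDeriv_laxOneForm_diagonalCLM_single {c : ι → ℝ} {u : (ι → ℝ) → ℝ} {y : ι → ℝ}
    (hu : ContDiffAt ℝ 2 u y) (s t : ι) :
    extDeriv (laxOneForm (diagonalCLM c) u) y ![Pi.single s 1, Pi.single t 1] =
      (c t - c s) * fderiv ℝ (fderiv ℝ u) y (Pi.single s 1) (Pi.single t 1) := by
  have hdiff : DifferentiableAt ℝ (fderiv ℝ u) y :=
    (hu.fderiv_right (m := 1) (by norm_num)).differentiableAt one_ne_zero
  have hdiag : ∀ r : ι, diagonalCLM c (Pi.single r 1) = c r • Pi.single r 1 := by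
    intro r; ext q; by_cases h : q = r <;> simp [diagonalCLM, h]
  rw [extDeriv_laxOneForm_apply hdiff, hdiag, hdiag, map_smul, map_smul,
    hu.isSymmSndFDerivAt (by simp) (Pi.single t 1)]
  simp only [smul_eq_mul]
  ring

end CoordinateTwoForm

section Heavenly

open scoped ContDiff

theorem pd2_eq_fderiv_fderiv {m : ℕ} {f : (Fin m → ℝ) → ℝ} {y : Fin m → ℝ}
    (hf : DifferentiableAt ℝ (fderiv ℝ f) y) (i j : Fin m) :
    pd2 m f i j y = fderiv ℝ (fderiv ℝ f) y (Pi.single j 1) (Pi.single i 1) := by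
  unfold pd2 pd
  rw [fderiv_clm_apply hf (differentiableAt_const _)]
  simp [e]

theorem pd2_comm {m : ℕ} {f : (Fin m → ℝ) → ℝ} {y : Fin m → ℝ} (hf : ContDiffAt ℝ 2 f y)
    (i j : Fin m) : pd2 m f i j y = pd2 m f j i y := by
  have hdiff := (hf.fderiv_right (m := 1) (by norm_num)).differentiableAt one_ne_zero
  rw [pd2_eq_fderiv_fderiv hdiff, pd2_eq_fderiv_fderiv hdiff, hf.isSymmSndFDerivAt (by simp)]

theorem ContDiffOn.pd {m : ℕ} {f : (Fin m → ℝ) → ℝ} {Ω : Set (Fin m → ℝ)}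
    (hf : ContDiffOn ℝ ∞ f Ω) (hΩ : IsOpen Ω) (i : Fin m) : ContDiffOn ℝ ∞ (pd m f i) Ω :=
  (hf.fderiv_of_isOpen hΩ (by simp)).clm_apply contDiffOn_const

theorem contDiffOn_Ufield {n : ℕ} {Ω : Set (Fin (n+1) → ℝ)} {u : (Fin (n+1) → ℝ) → ℝ}
    (hu : ContDiffOn ℝ ∞ u Ω) (hΩ : IsOpen Ω) (a : Fin (n+1) → ℝ) (lam : ℝ) (i j k : Fin (n+1)) :
    ContDiffOn ℝ ∞ (Ufield n a lam u i j k) Ω := by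
  have hpd2 : ∀ s t, ContDiffOn ℝ ∞ (pd2 (n+1) u s t) Ω := fun s t => (hu.pd hΩ s).pd hΩ t
  unfold Ufield
  fun_prop

noncomputable def laxCoeff {ι : Type*} (a : ι → ℝ) (lam : ℝ) (h : ι → ι → ℝ) (s t : ι) : ℝ :=
  (1 / (lam - a s) - 1 / (lam - a t)) * h s t

def IsHeavenlyHessian {ι : Type*} (a : ι → ℝ) (h : ι → ι → ℝ) : Prop :=
  ∀ i j k l : ι, i ≠ j → i ≠ k → i ≠ l → j ≠ k → j ≠ l → k ≠ l →
    (a k - a j) * (a l - a i) * (h j k * h i l) + (a i - a k) * (a l - a j) * (h i k * h j l)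
      + (a j - a i) * (a l - a k) * (h i j * h k l) = 0

theorem IsHeavenlyHessian.laxCoeff_pluecker {ι : Type*} {a : ι → ℝ} {h : ι → ι → ℝ}
    (hh : IsHeavenlyHessian a h) (hsymm : ∀ s t, h s t = h t s) {lam : ℝ} (hlam : ∀ m, lam ≠ a m)
    {i j k l : ι} (hij : i ≠ j) (hik : i ≠ k) (hil : i ≠ l) (hjk : j ≠ k) (hjl : j ≠ l)
    (hkl : k ≠ l) :
    laxCoeff a lam h i j * laxCoeff a lam h k l + laxCoeff a lam h j k * laxCoeff a lam h i l
      + laxCoeff a lam h k i * laxCoeff a lam h j l = 0 := by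
  have hdiff : ∀ s t, 1 / (lam - a s) - 1 / (lam - a t)
      = (a s - a t) * (1 / (lam - a s)) * (1 / (lam - a t)) := by
    intro s t
    field_simp [sub_ne_zero.2 (hlam s), sub_ne_zero.2 (hlam t)]
    ring
  simp only [laxCoeff, hdiff, hsymm k i]
  linear_combination (1 / (lam - a i)) * (1 / (lam - a j)) * (1 / (lam - a k)) *
    (1 / (lam - a l)) * hh i j k l hij hik hil hjk hjl hkl

noncomputable def laxTwoForm {m : ℕ} (a : Fin m → ℝ) (lam : ℝ) (u : (Fin m → ℝ) → ℝ) :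
    (Fin m → ℝ) → (Fin m → ℝ) [⋀^Fin 2]→L[ℝ] ℝ :=
  extDeriv (laxOneForm (diagonalCLM fun s => 1 / (a s - lam)) u)

section LaxTwoForm

variable {m : ℕ} {a : Fin m → ℝ} {lam : ℝ} {u : (Fin m → ℝ) → ℝ} {y : Fin m → ℝ}

theorem differentiableAt_laxTwoForm (hu : ContDiffAt ℝ 3 u y) :
    DifferentiableAt ℝ (laxTwoForm a lam u) y :=
  differentiableAt_extDeriv (contDiffAt_laxOneForm (r := 2) hu)

theorem extDeriv_laxTwoForm (hu : ContDiffAt ℝ 3 u y) : extDeriv (laxTwoForm a lam u) y = 0 :=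
  extDeriv_extDeriv_apply (contDiffAt_laxOneForm (r := 2) hu) (by simp)

theorem laxTwoForm_apply_single (hu : ContDiffAt ℝ 2 u y) (s t : Fin m) :
    laxTwoForm a lam u y ![Pi.single s 1, Pi.single t 1] =
      laxCoeff a lam (fun s t => pd2 m u s t y) s t := by
  have hdiff := (hu.fderiv_right (m := 1) (by norm_num)).differentiableAt one_ne_zero
  rw [laxTwoForm, extDeriv_laxOneForm_diagonalCLM_single hu, laxCoeff,
    pd2_eq_fderiv_fderiv hdiff, hu.isSymmSndFDerivAt (by simp)]
  rw [← neg_sub lam (a t), ← neg_sub lam (a s), div_neg, div_neg]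
  ring

end LaxTwoForm

theorem Ufield_eq_laxVector {n : ℕ} {a : Fin (n+1) → ℝ} {lam : ℝ} {u : (Fin (n+1) → ℝ) → ℝ}
    {y : Fin (n+1) → ℝ} (hu : ContDiffAt ℝ 2 u y) (i j k : Fin (n+1)) :
    Ufield n a lam u i j k y = laxVector (laxTwoForm a lam u y) i j k := by
  simp only [Ufield, laxVector, laxTwoForm_apply_single hu, laxCoeff, e, pd2_comm hu k i]

theorem laxTwoForm_apply_Ufield_eq_zero {n : ℕ} {a : Fin (n+1) → ℝ} {lam : ℝ}
    (hlam : ∀ m, lam ≠ a m) {u : (Fin (n+1) → ℝ) → ℝ} {y : Fin (n+1) → ℝ}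
    (hu : ContDiffAt ℝ 2 u y) (hh : IsHeavenlyHessian a fun s t => pd2 (n+1) u s t y)
    (i j k : Fin (n+1)) (v : Fin (n+1) → ℝ) :
    laxTwoForm a lam u y ![Ufield n a lam u i j k y, v] = 0 := by
  rw [Ufield_eq_laxVector hu]
  refine map_vecCons_laxVector_eq_zero _ (fun i j k l hij hik hil hjk hjl hkl => ?_) i j k v
  simp only [plueckerSum, laxTwoForm_apply_single hu]
  exact hh.laxCoeff_pluecker (pd2_comm hu) hlam hij hik hil hjk hjl hkl

end Heavenly

theorem stmt_5_general (n : ℕ) (Ω : Set (Fin (n+1) → ℝ)) (hΩ : IsOpen Ω)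
    (a : Fin (n+1) → ℝ)
    (u : (Fin (n+1) → ℝ) → ℝ) (hu : ContDiffOn ℝ (⊤:ℕ∞) u Ω)
    (hgh : ∀ i j k l : Fin (n+1),
      i ≠ j → i ≠ k → i ≠ l → j ≠ k → j ≠ l → k ≠ l → ∀ x ∈ Ω,
      (a k - a j) * (a l - a i) * (pd2 (n+1) u j k x * pd2 (n+1) u i l x)
      + (a i - a k) * (a l - a j) * (pd2 (n+1) u i k x * pd2 (n+1) u j l x)
      + (a j - a i) * (a l - a k) * (pd2 (n+1) u i j x * pd2 (n+1) u k l x) = 0)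
    (lam : ℝ) (hlam : ∀ m, lam ≠ a m)
    (i j k p q r : Fin (n+1))
    (x : Fin (n+1) → ℝ) (hx : x ∈ Ω) :
    vbr (n+1) (Ufield n a lam u i j k) (Ufield n a lam u p q r) x ∈
      Submodule.span ℝ { y : Fin (n+1) → ℝ | ∃ b c d : Fin (n+1),
        b ≠ c ∧ c ≠ d ∧ b ≠ d ∧ y = Ufield n a lam u b c d x } := by
  have hsmooth : ∀ y ∈ Ω, ContDiffAt ℝ 3 u y := fun y hy =>
    (hu.contDiffAt (hΩ.mem_nhds hy)).of_le (by norm_cast)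
  have hker : ∀ b c d, ∀ᶠ y in 𝓝 x, ∀ v, laxTwoForm a lam u y ![Ufield n a lam u b c d y, v] = 0 :=
    fun b c d => Filter.mem_of_superset (hΩ.mem_nhds hx) fun y hy =>
      laxTwoForm_apply_Ufield_eq_zero hlam ((hsmooth y hy).of_le (by norm_num))
        (fun i j k l hij hik hil hjk hjl hkl => hgh i j k l hij hik hil hjk hjl hkl y hy) b c d
  have hdiff : ∀ b c d, DifferentiableAt ℝ (Ufield n a lam u b c d) x := fun b c d =>
    ((contDiffOn_Ufield hu hΩ a lam b c d).contDiffAt (hΩ.mem_nhds hx)).differentiableAt (by simp)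
  have hbracket := map_lieBracket_vecCons_eq_zero_of_extDeriv_eq_zero
    (differentiableAt_laxTwoForm (hsmooth x hx)) (extDeriv_laxTwoForm (hsmooth x hx))
    (hdiff i j k) (hdiff p q r) (hker i j k) (hker p q r)
  have hU := Ufield_eq_laxVector (a := a) (lam := lam) ((hsmooth x hx).of_le (by norm_num))
  simp only [hU]
  by_cases hω : ∃ b c, laxTwoForm a lam u x ![Pi.single b 1, Pi.single c 1] ≠ 0
  · obtain ⟨b, c, hbc⟩ := hω
    exact mem_span_laxVector _ hbracket hbc
  · simp only [not_exists, not_not] at hω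
    have hzero : ∀ b c d, Ufield n a lam u b c d x = 0 := fun b c d => by
      simp [hU, laxVector, hω]
    simp [vbr, hzero]

/-- On every solution of the general heavenly hierarchy, the Lie bracket of any two
Lax fields `U_{ijk}`, `U_{pqr}` lies in the pointwise span of all the Lax fields:
the Lax distribution is involutive. -/
theorem stmt_5 (n : ℕ) (Ω : Set (Fin (n+1) → ℝ)) (hΩ : IsOpen Ω)
    (a : Fin (n+1) → ℝ) (ha : Function.Injective a)
    (u : (Fin (n+1) → ℝ) → ℝ) (hu : ContDiffOn ℝ (⊤:ℕ∞) u Ω)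
    (hgh : ∀ i j k l : Fin (n+1),
      i ≠ j → i ≠ k → i ≠ l → j ≠ k → j ≠ l → k ≠ l → ∀ x ∈ Ω,
      (a k - a j) * (a l - a i) * (pd2 (n+1) u j k x * pd2 (n+1) u i l x)
      + (a i - a k) * (a l - a j) * (pd2 (n+1) u i k x * pd2 (n+1) u j l x)
      + (a j - a i) * (a l - a k) * (pd2 (n+1) u i j x * pd2 (n+1) u k l x) = 0)
    (lam : ℝ) (hlam : ∀ m, lam ≠ a m)
    (i j k p q r : Fin (n+1))
    (hij : i ≠ j) (hjk : j ≠ k) (hik : i ≠ k)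
    (hpq : p ≠ q) (hqr : q ≠ r) (hpr : p ≠ r)
    (x : Fin (n+1) → ℝ) (hx : x ∈ Ω) :
    vbr (n+1) (Ufield n a lam u i j k) (Ufield n a lam u p q r) x ∈
      Submodule.span ℝ { y : Fin (n+1) → ℝ | ∃ b c d : Fin (n+1),
        b ≠ c ∧ c ≠ d ∧ b ≠ d ∧ y = Ufield n a lam u b c d x } :=
  stmt_5_general n Ω hΩ a u hu hgh lam hlam i j k p q r x hx
end

section
/- Let Ω ⊆ ℝ^5 be open and let u : Ω → ℝ be smooth satisfying the modified heavenly system: u_{15} − u_{13}u_{44} + u_{14}u_{34} = 0, u_{14}u_{23} − u_{13}u_{24} = 1, and u_{25} − u_{23}u_{44} + u_{24}u_{34} = 0 on Ω. For λ ∈ ℝ define the vector fields on Ω: W₁ = λ∂₁ + u_{14}∂₃ − u_{13}∂₄, W₂ = λ∂₂ + u_{24}∂₃ − u_{23}∂₄, W₃ = ∂₅ − u_{44}∂₃ + (u_{34} − λ)∂₄. Then for every λ ∈ ℝ, every x ∈ Ω and all a, b ∈ {1,2,3}, the Lie bracket [W_a, W_b](x) lies in the linear span of {W₁(x), W₂(x),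 W₃(x)}. -/
/-- The Lax fields `W₁ = λ∂₁ + u₁₄∂₃ − u₁₃∂₄`, `W₂ = λ∂₂ + u₂₄∂₃ − u₂₃∂₄`,
`W₃ = ∂₅ − u₄₄∂₃ + (u₃₄ − λ)∂₄` of the modified heavenly hierarchy
(coordinates `x¹,…,x⁵` are indexed by `0,…,4`). -/
noncomputable def Wf (u : (Fin 5 → ℝ) → ℝ) (lam : ℝ) :
    Fin 3 → (Fin 5 → ℝ) → (Fin 5 → ℝ) :=
  ![fun x => lam • e 5 0 + pd2 5 u 0 3 x • e 5 2 - pd2 5 u 0 2 x • e 5 3,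
    fun x => lam • e 5 1 + pd2 5 u 1 3 x • e 5 2 - pd2 5 u 1 2 x • e 5 3,
    fun x => e 5 4 - pd2 5 u 3 3 x • e 5 2 + (pd2 5 u 2 3 x - lam) • e 5 3]

/-!
Each Lax field is a constant field plus a Hamiltonian field for `dx³ ∧ dx⁴`: up to the
constant parts, `W₁`, `W₂`, `W₃` are the Hamiltonian fields of `u₁`, `u₂` and `λx³ − u₄`.
Expanding the brackets and using the symmetry of third derivatives of `u`, each `[W_a, W_b]`
turns out to be (up to sign) the Hamiltonian field of the left-hand side of one equation of the
system: `[W₁, W₂]` of `u₁₄u₂₃ − u₁₃u₂₄`, `[W₁, W₃]` and `[W₂, W₃]` of the other two. These are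
locally constant on `Ω`, so all brackets vanish and the distribution is even abelian.
-/

open Filter Topology
open scoped ContDiff

section Partials

variable {m : ℕ} {f g : (Fin m → ℝ) → ℝ} {x : Fin m → ℝ}

theorem fderiv_apply_e (f : (Fin m → ℝ) → ℝ) (x : Fin m → ℝ) (i : Fin m) :
    fderiv ℝ f x (e m i) = pd m f i x := rfl

theorem ContDiffAt.pd (hf : ContDiffAt ℝ ∞ f x) (i : Fin m) : ContDiffAt ℝ ∞ (pd m f i) x :=
  (hf.fderiv_right (m := ∞) le_rfl).clm_apply contDiffAt_const

theorem ContDiffAt.differentiableAt_pd2 (hf : ContDiffAt ℝ ∞ f x) (i j : Fin m) :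
    DifferentiableAt ℝ (pd2 m f i j) x :=
  ((hf.pd i).pd j).differentiableAt (by simp)

theorem fderiv_pd_apply (hf : DifferentiableAt ℝ (fderiv ℝ f) x) (i : Fin m)
    (v : Fin m → ℝ) : fderiv ℝ (pd m f i) x v = fderiv ℝ (fderiv ℝ f) x v (e m i) := by
  rw [show pd m f i = fun y => fderiv ℝ f y (e m i) from rfl,
    fderiv_clm_apply hf (differentiableAt_const _)]
  simp

theorem pd_pd_comm (hf : ContDiffAt ℝ ∞ f x) (i j : Fin m) :
    pd m (pd m f i) j x = pd m (pd m f j) i x := by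
  have hd : DifferentiableAt ℝ (fderiv ℝ f) x :=
    (hf.fderiv_right (m := ∞) le_rfl).differentiableAt (by simp)
  have hsymm : IsSymmSndFDerivAt ℝ f x :=
    hf.isSymmSndFDerivAt (by rw [minSmoothness_of_isRCLikeNormedField]; norm_cast)
  simp only [pd, fderiv_pd_apply hd]
  exact hsymm _ _

theorem pd_pd2_comm_right (hf : ContDiffAt ℝ ∞ f x) (i j k : Fin m) :
    pd m (pd2 m f i j) k x = pd m (pd2 m f i k) j x :=
  pd_pd_comm (hf.pd i) j k

theorem pd_pd2_comm_left (hf : ∀ᶠ y in 𝓝 x, ContDiffAt ℝ ∞ f y) (i j k : Fin m) :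
    pd m (pd2 m f i j) k x = pd m (pd2 m f j i) k x := by
  have hsymm : pd2 m f i j =ᶠ[𝓝 x] pd2 m f j i := hf.mono fun y hy => pd_pd_comm hy i j
  simp only [pd, hsymm.fderiv_eq]

theorem pd_eq_zero_of_eventually_eq_const {c : ℝ} (hf : ∀ᶠ y in 𝓝 x, f y = c) (i : Fin m) :
    pd m f i x = 0 := by
  have hconst : f =ᶠ[𝓝 x] fun _ => c := hf
  simp [pd, hconst.fderiv_eq]

theorem pd_add (hf : DifferentiableAt ℝ f x) (hg : DifferentiableAt ℝ g x) (i : Fin m) :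
    pd m (fun y => f y + g y) i x = pd m f i x + pd m g i x := by
  simp [pd, fderiv_fun_add hf hg]

theorem pd_sub (hf : DifferentiableAt ℝ f x) (hg : DifferentiableAt ℝ g x) (i : Fin m) :
    pd m (fun y => f y - g y) i x = pd m f i x - pd m g i x := by
  simp [pd, fderiv_fun_sub hf hg]

theorem pd_mul (hf : DifferentiableAt ℝ f x) (hg : DifferentiableAt ℝ g x) (i : Fin m) :
    pd m (fun y => f y * g y) i x = f x * pd m g i x + g x * pd m f i x := by
  simp [pd, fderiv_fun_mul hf hg]

end Partials

section Brackets

variable {m : ℕ} {x c c' v w : Fin m → ℝ} {p q p' q' : (Fin m → ℝ) → ℝ}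

theorem vbr_comm (X Y : (Fin m → ℝ) → Fin m → ℝ) (x : Fin m → ℝ) :
    vbr m X Y x = -vbr m Y X x := by
  simp [vbr]

theorem vbr_self (X : (Fin m → ℝ) → Fin m → ℝ) (x : Fin m → ℝ) : vbr m X X x = 0 :=
  sub_self _

theorem fderiv_const_add_smul_add_smul (hp : DifferentiableAt ℝ p x)
    (hq : DifferentiableAt ℝ q x) (a : Fin m → ℝ) :
    fderiv ℝ (fun y => c + p y • v + q y • w) x a = fderiv ℝ p x a • v + fderiv ℝ q x a • w := by
  rw [(((hasFDerivAt_const c x).fun_add (hp.hasFDerivAt.smul_const v)).fun_add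
    (hq.hasFDerivAt.smul_const w)).fderiv]
  simp

theorem vbr_const_add_smul_add_smul (hp : DifferentiableAt ℝ p x) (hq : DifferentiableAt ℝ q x)
    (hp' : DifferentiableAt ℝ p' x) (hq' : DifferentiableAt ℝ q' x) :
    vbr m (fun y => c + p y • v + q y • w) (fun y => c' + p' y • v + q' y • w) x =
      (fderiv ℝ p' x (c + p x • v + q x • w) - fderiv ℝ p x (c' + p' x • v + q' x • w)) • v +
      (fderiv ℝ q' x (c + p x • v + q x • w) - fderiv ℝ q x (c' + p' x • v + q' x • w)) • w := by
  rw [vbr, fderiv_const_add_smul_add_smul hp' hq', fderiv_const_add_smul_add_smul hp hq]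
  module

end Brackets

/-- The Hamiltonian vector field `∂₄F ∂₃ − ∂₃F ∂₄` of `F` for the symplectic form `dx³ ∧ dx⁴`. -/
noncomputable def hamiltonianField (F : (Fin 5 → ℝ) → ℝ) (x : Fin 5 → ℝ) : Fin 5 → ℝ :=
  pd 5 F 3 x • e 5 2 - pd 5 F 2 x • e 5 3

theorem hamiltonianField_eq_zero {F : (Fin 5 → ℝ) → ℝ} {x : Fin 5 → ℝ} {c : ℝ}
    (hF : ∀ᶠ y in 𝓝 x, F y = c) : hamiltonianField F x = 0 := by
  simp [hamiltonianField, pd_eq_zero_of_eventually_eq_const hF]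

section Heavenly

variable (u : (Fin 5 → ℝ) → ℝ) (lam : ℝ)

theorem Wf_zero :
    Wf u lam 0 = fun y => lam • e 5 0 + pd2 5 u 0 3 y • e 5 2 + (-pd2 5 u 0 2 y) • e 5 3 := by
  funext y; simp [Wf, sub_eq_add_neg]

theorem Wf_one :
    Wf u lam 1 = fun y => lam • e 5 1 + pd2 5 u 1 3 y • e 5 2 + (-pd2 5 u 1 2 y) • e 5 3 := by
  funext y; simp [Wf, sub_eq_add_neg]

theorem Wf_two :
    Wf u lam 2 = fun y => e 5 4 + (-pd2 5 u 3 3 y) • e 5 2 + (pd2 5 u 2 3 y - lam) • e 5 3 := by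
  funext y; simp [Wf, sub_eq_add_neg]

variable {u} {x : Fin 5 → ℝ}

theorem vbr_Wf_zero_one (hu : ∀ᶠ y in 𝓝 x, ContDiffAt ℝ ∞ u y) :
    vbr 5 (Wf u lam 0) (Wf u lam 1) x =
      hamiltonianField
        (fun y => pd2 5 u 0 3 y * pd2 5 u 1 2 y - pd2 5 u 0 2 y * pd2 5 u 1 3 y) x := by
  have hd := hu.self_of_nhds.differentiableAt_pd2
  have hsymm_right := pd_pd2_comm_right hu.self_of_nhds
  have hsymm_left := pd_pd2_comm_left hu
  rw [Wf_zero, Wf_one, vbr_const_add_smul_add_smul (hd 0 3) (hd 0 2).fun_neg (hd 1 3)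
    (hd 1 2).fun_neg, hamiltonianField, sub_eq_add_neg _ (_ • e 5 3), ← neg_smul]
  simp only [map_add, map_smul, fderiv_fun_neg, fderiv_apply_e, neg_apply,
    smul_eq_mul, pd_sub ((hd 0 3).fun_mul (hd 1 2)) ((hd 0 2).fun_mul (hd 1 3)),
    pd_mul (hd 0 3) (hd 1 2), pd_mul (hd 0 2) (hd 1 3)]
  -- each coefficient is an identity between third derivatives of `u`; `grind` proves it once
  -- `hsymm_right` and `hsymm_left` identify third derivatives with permuted indices
  congr 2 <;> grind

theorem vbr_Wf_zero_two (hu : ∀ᶠ y in 𝓝 x, ContDiffAt ℝ ∞ u y) :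
    vbr 5 (Wf u lam 0) (Wf u lam 2) x =
      -hamiltonianField (fun y => pd2 5 u 0 4 y - pd2 5 u 0 2 y * pd2 5 u 3 3 y
          + pd2 5 u 0 3 y * pd2 5 u 2 3 y) x := by
  have hd := hu.self_of_nhds.differentiableAt_pd2
  have hsymm_right := pd_pd2_comm_right hu.self_of_nhds
  have hsymm_left := pd_pd2_comm_left hu
  rw [Wf_zero, Wf_two, vbr_const_add_smul_add_smul (hd 0 3) (hd 0 2).fun_neg (hd 3 3).fun_neg
    ((hd 2 3).sub_const lam), hamiltonianField, neg_sub, sub_eq_add_neg _ (_ • e 5 2),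
    ← neg_smul, add_comm (_ • e 5 3)]
  simp only [map_add, map_smul, fderiv_fun_neg, fderiv_sub_const, fderiv_apply_e,
    neg_apply, smul_eq_mul,
    pd_add ((hd 0 4).fun_sub ((hd 0 2).fun_mul (hd 3 3))) ((hd 0 3).fun_mul (hd 2 3)),
    pd_sub (hd 0 4) ((hd 0 2).fun_mul (hd 3 3)), pd_mul (hd 0 2) (hd 3 3),
    pd_mul (hd 0 3) (hd 2 3)]
  congr 2 <;> grind

theorem vbr_Wf_one_two (hu : ∀ᶠ y in 𝓝 x, ContDiffAt ℝ ∞ u y) :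
    vbr 5 (Wf u lam 1) (Wf u lam 2) x =
      -hamiltonianField (fun y => pd2 5 u 1 4 y - pd2 5 u 1 2 y * pd2 5 u 3 3 y
          + pd2 5 u 1 3 y * pd2 5 u 2 3 y) x := by
  have hd := hu.self_of_nhds.differentiableAt_pd2
  have hsymm_right := pd_pd2_comm_right hu.self_of_nhds
  have hsymm_left := pd_pd2_comm_left hu
  rw [Wf_one, Wf_two, vbr_const_add_smul_add_smul (hd 1 3) (hd 1 2).fun_neg (hd 3 3).fun_neg
    ((hd 2 3).sub_const lam), hamiltonianField, neg_sub, sub_eq_add_neg _ (_ • e 5 2),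
    ← neg_smul, add_comm (_ • e 5 3)]
  simp only [map_add, map_smul, fderiv_fun_neg, fderiv_sub_const, fderiv_apply_e,
    neg_apply, smul_eq_mul,
    pd_add ((hd 1 4).fun_sub ((hd 1 2).fun_mul (hd 3 3))) ((hd 1 3).fun_mul (hd 2 3)),
    pd_sub (hd 1 4) ((hd 1 2).fun_mul (hd 3 3)), pd_mul (hd 1 2) (hd 3 3),
    pd_mul (hd 1 3) (hd 2 3)]
  congr 2 <;> grind

theorem vbr_Wf_eq_zero (hu : ∀ᶠ y in 𝓝 x, ContDiffAt ℝ ∞ u y)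
    (h1 : ∀ᶠ y in 𝓝 x, pd2 5 u 0 4 y - pd2 5 u 0 2 y * pd2 5 u 3 3 y
        + pd2 5 u 0 3 y * pd2 5 u 2 3 y = 0)
    (h2 : ∀ᶠ y in 𝓝 x, pd2 5 u 0 3 y * pd2 5 u 1 2 y - pd2 5 u 0 2 y * pd2 5 u 1 3 y = 1)
    (h3 : ∀ᶠ y in 𝓝 x, pd2 5 u 1 4 y - pd2 5 u 1 2 y * pd2 5 u 3 3 y
        + pd2 5 u 1 3 y * pd2 5 u 2 3 y = 0) (a b : Fin 3) :
    vbr 5 (Wf u lam a) (Wf u lam b) x = 0 := by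
  have h01 := (vbr_Wf_zero_one lam hu).trans (hamiltonianField_eq_zero h2)
  have h02 := (vbr_Wf_zero_two lam hu).trans (by rw [hamiltonianField_eq_zero h1, neg_zero])
  have h12 := (vbr_Wf_one_two lam hu).trans (by rw [hamiltonianField_eq_zero h3, neg_zero])
  fin_cases a <;> fin_cases b <;>
    simp [vbr_self, vbr_comm _ (Wf u lam 0), vbr_comm (Wf u lam 2), h01, h02, h12]

end Heavenly

/-- On every solution of the modified heavenly system, the Lax distribution
`⟨W₁, W₂, W₃⟩` is involutive for every value of the spectral parameter. -/
theorem stmt_6 (Ω : Set (Fin 5 → ℝ)) (hΩ : IsOpen Ω)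
    (u : (Fin 5 → ℝ) → ℝ) (hu : ContDiffOn ℝ (⊤:ℕ∞) u Ω)
    (h1 : ∀ x ∈ Ω, pd2 5 u 0 4 x - pd2 5 u 0 2 x * pd2 5 u 3 3 x
        + pd2 5 u 0 3 x * pd2 5 u 2 3 x = 0)
    (h2 : ∀ x ∈ Ω, pd2 5 u 0 3 x * pd2 5 u 1 2 x - pd2 5 u 0 2 x * pd2 5 u 1 3 x = 1)
    (h3 : ∀ x ∈ Ω, pd2 5 u 1 4 x - pd2 5 u 1 2 x * pd2 5 u 3 3 x
        + pd2 5 u 1 3 x * pd2 5 u 2 3 x = 0) :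
    ∀ lam : ℝ, ∀ x ∈ Ω, ∀ a b : Fin 3,
      vbr 5 (Wf u lam a) (Wf u lam b) x ∈
        Submodule.span ℝ ({Wf u lam 0 x, Wf u lam 1 x, Wf u lam 2 x} : Set (Fin 5 → ℝ)) := by
  intro lam x hx a b
  have hΩx : ∀ᶠ y in 𝓝 x, y ∈ Ω := hΩ.eventually_mem hx
  have hsmooth : ∀ᶠ y in 𝓝 x, ContDiffAt ℝ ∞ u y :=
    hΩx.mono fun y hy => hu.contDiffAt (hΩ.mem_nhds hy)
  rw [vbr_Wf_eq_zero lam hsmooth (hΩx.mono h1) (hΩx.mono h2) (hΩx.mono h3) a b]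
  exact zero_mem _
end

section
/- Let K be a field, let V be a K-vector space with dim V = 2k+1 (k ≥ 1), and let Π₁, …, Π_{k+1} be 2-dimensional subspaces of V such that Π₁ + ⋯ + Π_{k+1} = V and, for each i, the subspace U_i = Σ_{j ≠ i} Π_j has dimension 2k. Define ℓ_i = Π_i ⊓ U_i. Then the subspace ℓ₁ + ⋯ + ℓ_{k+1} has dimension at most k (and each ℓ_i has dimension 1). -/
open Module

/-- Lemma 1 of the paper: given `k+1` two-dimensional subspaces `P i` of a
`(2k+1)`-dimensional space in general position (they span `V` and each
`U i = Σ_{j ≠ i} P j` has dimension `2k`), the intersection lines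
`ℓ i = P i ⊓ U i` all lie in a common subspace of dimension `k`
(and each `ℓ i` is a line). -/
theorem stmt_17 (K : Type*) [Field K] (V : Type*) [AddCommGroup V] [Module K V]
    [FiniteDimensional K V]
    (k : ℕ) (hk : 1 ≤ k) (hdim : Module.finrank K V = 2 * k + 1)
    (P : Fin (k+1) → Submodule K V)
    (hPdim : ∀ i, Module.finrank K (P i) = 2)
    (hspan : (⨆ i, P i) = ⊤)
    (U : Fin (k+1) → Submodule K V)
    (hU : ∀ i, U i = ⨆ j, ⨆ (_ : j ≠ i), P j)
    (hUdim : ∀ i, Module.finrank K (U i) = 2 * k)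
    (l : Fin (k+1) → Submodule K V)
    (hl : ∀ i, l i = P i ⊓ U i) :
    Module.finrank K ((⨆ i, l i) : Submodule K V) ≤ k
      ∧ ∀ i, Module.finrank K (l i) = 1 := by
  have hPU : ∀ j i : Fin (k+1), j ≠ i → P j ≤ U i := by
    intro j i hji
    rw [hU i]
    exact le_iSup_of_le j (le_iSup_of_le hji le_rfl)
  have hsup : ∀ i, P i ⊔ U i = ⊤ := by
    intro i
    refine le_antisymm le_top ?_
    rw [← hspan]
    refine iSup_le fun j => ?_
    by_cases hji : j = i
    · subst hji; exact le_sup_left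
    · exact (hPU j i hji).trans le_sup_right
  -- each line has dimension 1
  have hline : ∀ i, Module.finrank K (l i) = 1 := by
    intro i
    have := Submodule.finrank_sup_add_finrank_inf_eq (P i) (U i)
    rw [hsup i, finrank_top, hdim, hPdim i, hUdim i] at this
    rw [hl i]; omega
  refine ⟨?_, hline⟩
  -- the chain of intersections
  set W : ℕ → Submodule K V := fun s => ⨅ i : Fin (k+1), ⨅ (_ : (i : ℕ) < s), U i with hW
  have hWstep : ∀ (s : ℕ) (hs : s < k + 1), W (s+1) = W s ⊓ U ⟨s, hs⟩ := by
    intro s hs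
    apply le_antisymm
    · refine le_inf ?_ ?_
      · exact le_iInf fun i => le_iInf fun h => iInf_le_of_le i (iInf_le_of_le (by omega) le_rfl)
      · exact iInf_le_of_le ⟨s, by omega⟩ (iInf_le_of_le (by simp) le_rfl)
    · refine le_iInf fun i => le_iInf fun h => ?_
      by_cases h' : (i : ℕ) < s
      · exact inf_le_left.trans (iInf_le_of_le i (iInf_le_of_le h' le_rfl))
      · have : i = ⟨s, by omega⟩ := by ext; simp at h ⊢; omega
        rw [this]; exact inf_le_right
  have hPW : ∀ (s : ℕ) (hs : s < k + 1), P ⟨s, hs⟩ ≤ W s := by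
    intro s hs
    refine le_iInf fun i => le_iInf fun h => hPU _ _ ?_
    intro heq
    rw [← heq] at h; simp at h
  have key : ∀ s : ℕ, 1 ≤ s → s ≤ k + 1 → Module.finrank K (W s) + s ≤ 2 * k + 1 := by
    intro s
    induction s with
    | zero => omega
    | succ n ih =>
      intro _ hn
      by_cases hn1 : n = 0
      · subst hn1
        show Module.finrank K (W 1) + 1 ≤ 2 * k + 1
        have h1 : W 1 ≤ U 0 := by
          refine iInf_le_of_le 0 (iInf_le_of_le ?_ le_rfl)
          simp
        have := Submodule.finrank_mono h1
        rw [hUdim 0] at this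
        omega
      · have hnk : n < k + 1 := by omega
        have hstep := hWstep n hnk
        have hsup' : W n ⊔ U ⟨n, by omega⟩ = ⊤ := by
          refine le_antisymm le_top ?_
          rw [← hspan]
          refine iSup_le fun j => ?_
          by_cases hj : j = ⟨n, by omega⟩
          · subst hj; exact (hPW n hnk).trans le_sup_left
          · exact (hPU j _ hj).trans le_sup_right
        have hrk := Submodule.finrank_sup_add_finrank_inf_eq (W n) (U ⟨n, by omega⟩)
        rw [hsup', finrank_top, hdim, hUdim] at hrk
        have ihn := ih (by omega) (by omega)
        rw [hstep]
        omega
  -- the span of the lines lies in W (k+1)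
  have hle : (⨆ i, l i) ≤ W (k+1) := by
    refine iSup_le fun i => le_iInf fun j => le_iInf fun _ => ?_
    rw [hl i]
    by_cases hij : i = j
    · subst hij; exact inf_le_right
    · exact inf_le_left.trans (hPU i j hij)
  have hfin := key (k+1) (by omega) le_rfl
  have := Submodule.finrank_mono hle
  omega
end

section
/- Let K be a field, k, l ≥ 1, and x : Fin (k+1) → K, y : Fin (l+1) → K. Then the following are equivalent: (i) x_i x_j = x_{i+1} x_{j−1} for all 0 ≤ i < j ≤ k, y_i y_j = y_{i+1} y_{j−1} for all 0 ≤ i < j ≤ l, and x_i y_j = x_{i+1} y_{j−1} for all 0 ≤ i < k, 0 < j ≤ l; (ii) there exist α, β, λ₀, λ₁ ∈ K with (λ₀, λ₁) ≠ (0, 0) such that x_i = α λ₀^{k−i} λ₁^{i} for all 0 ≤ i ≤ k and y_j = β λ₀^{l−j} λ₁^{j} for all 0 ≤ j ≤ l. -/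
private lemma quadlem {K : Type*} [Field K] (α β t₀ t₁ : K) (k l i j : ℕ)
    (hi : i < k) (hj0 : 0 < j) (hj : j ≤ l) :
    (α * t₀^(k-i) * t₁^i) * (β * t₀^(l-j) * t₁^j)
      = (α * t₀^(k-(i+1)) * t₁^(i+1)) * (β * t₀^(l-(j-1)) * t₁^(j-1)) := by
  have h : ∀ a b c d : ℕ, (α*t₀^a*t₁^b) * (β*t₀^c*t₁^d) = α*β*t₀^(a+c)*t₁^(b+d) := by
    intros a b c d; rw [pow_add, pow_add]; ring
  rw [h, h, show (k-i)+(l-j) = (k-(i+1))+(l-(j-1)) by omega,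
      show i+j = (i+1)+(j-1) by omega]

private lemma seqlem {K : Type*} [Field K] (k : ℕ) (hk : 1 ≤ k) (x : Fin (k+1) → K)
    (hx : ∀ i j : ℕ, ∀ (_ : i < j) (_ : j ≤ k),
      x ⟨i, by omega⟩ * x ⟨j, by omega⟩ = x ⟨i+1, by omega⟩ * x ⟨j-1, by omega⟩) :
    (x ⟨0, by omega⟩ ≠ 0 ∧ ∀ i : ℕ, (h : i ≤ k) →
        x ⟨i, by omega⟩ = x ⟨0, by omega⟩ * (x ⟨1, by omega⟩ / x ⟨0, by omega⟩)^i)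
    ∨ (∀ i : ℕ, (h : i < k) → x ⟨i, by omega⟩ = 0) := by
  by_cases h0 : x ⟨0, by omega⟩ = 0
  · right
    intro i
    induction i with
    | zero => intro _; exact h0
    | succ n ih =>
      intro h
      have hrel := hx n (n+2) (by omega) (by omega)
      have hn : x ⟨n, by omega⟩ = 0 := ih (by omega)
      rw [hn, zero_mul] at hrel
      have : x ⟨n+1, by omega⟩ * x ⟨n+1, by omega⟩ = 0 := hrel.symm
      exact mul_self_eq_zero.mp this
  · left
    refine ⟨h0, ?_⟩
    intro i
    induction i with
    | zero => intro _; simp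
    | succ n ih =>
      intro h
      have hrel := hx 0 (n+1) (by omega) (by omega)
      have hn : x ⟨n, by omega⟩ = x ⟨0, by omega⟩ * (x ⟨1, by omega⟩ / x ⟨0, by omega⟩)^n :=
        ih (by omega)
      have h01 : x ⟨0+1, by omega⟩ = x ⟨1, by omega⟩ := rfl
      have hsub : x ⟨n+1-1, by omega⟩ = x ⟨n, by omega⟩ := rfl
      rw [h01, hsub, hn] at hrel
      have hT : x ⟨0, by omega⟩ * (x ⟨1, by omega⟩ / x ⟨0, by omega⟩) = x ⟨1, by omega⟩ := by
        rw [← mul_div_assoc, mul_comm, mul_div_assoc, div_self h0, mul_one]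
      have goal : x ⟨0, by omega⟩ * (x ⟨0, by omega⟩ * (x ⟨1, by omega⟩ / x ⟨0, by omega⟩)^(n+1))
          = x ⟨0, by omega⟩ * x ⟨n+1, by omega⟩ := by
        calc x ⟨0, by omega⟩ * (x ⟨0, by omega⟩ * (x ⟨1, by omega⟩ / x ⟨0, by omega⟩)^(n+1))
            = (x ⟨0, by omega⟩ * (x ⟨1, by omega⟩ / x ⟨0, by omega⟩))
              * (x ⟨0, by omega⟩ * (x ⟨1, by omega⟩ / x ⟨0, by omega⟩)^n) := by
              rw [pow_succ]; ring
          _ = x ⟨1, by omega⟩ * (x ⟨0, by omega⟩ * (x ⟨1, by omega⟩ / x ⟨0, by omega⟩)^n) := by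
              rw [hT]
          _ = x ⟨0, by omega⟩ * x ⟨n+1, by omega⟩ := hrel.symm
      exact (mul_left_cancel₀ h0 goal).symm

/-- The rational normal scroll `S_{k,l}` in `K^{k+1} × K^{l+1}` is cut out by the
quadratic equations `xᵢxⱼ = xᵢ₊₁xⱼ₋₁` (`0 ≤ i < j ≤ k`), `yᵢyⱼ = yᵢ₊₁yⱼ₋₁`
(`0 ≤ i < j ≤ l`), `xᵢyⱼ = xᵢ₊₁yⱼ₋₁` (`0 ≤ i < k`, `0 < j ≤ l`): a point
satisfies these equations iff it is of the form
`xᵢ = α t₀^{k−i} t₁^i`, `yⱼ = β t₀^{l−j} t₁^j` with `(t₀,t₁) ≠ (0,0)`. -/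
theorem stmt_18 (K : Type*) [Field K] (k l : ℕ) (hk : 1 ≤ k) (hl : 1 ≤ l)
    (x : Fin (k+1) → K) (y : Fin (l+1) → K) :
    ((∀ i j : ℕ, ∀ (hij : i < j) (hj : j ≤ k),
        x ⟨i, by omega⟩ * x ⟨j, by omega⟩ = x ⟨i+1, by omega⟩ * x ⟨j-1, by omega⟩)
      ∧ (∀ i j : ℕ, ∀ (hij : i < j) (hj : j ≤ l),
        y ⟨i, by omega⟩ * y ⟨j, by omega⟩ = y ⟨i+1, by omega⟩ * y ⟨j-1, by omega⟩)
      ∧ (∀ i j : ℕ, ∀ (hi : i < k) (hj0 : 0 < j) (hj : j ≤ l),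
        x ⟨i, by omega⟩ * y ⟨j, by omega⟩ = x ⟨i+1, by omega⟩ * y ⟨j-1, by omega⟩))
    ↔ (∃ α β t₀ t₁ : K, ¬(t₀ = 0 ∧ t₁ = 0)
        ∧ (∀ i : Fin (k+1), x i = α * t₀ ^ (k - (i : ℕ)) * t₁ ^ (i : ℕ))
        ∧ (∀ j : Fin (l+1), y j = β * t₀ ^ (l - (j : ℕ)) * t₁ ^ (j : ℕ))) := by
  constructor
  · rintro ⟨hxx, hyy, hxy⟩
    rcases seqlem k hk x hxx with ⟨hx0, hxg⟩ | hxz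
    · rcases seqlem l hl y hyy with ⟨hy0, hyg⟩ | hyz
      · -- both geometric, ratios agree
        refine ⟨x ⟨0, by omega⟩, y ⟨0, by omega⟩, 1, x ⟨1, by omega⟩ / x ⟨0, by omega⟩,
          by simp, ?_, ?_⟩
        · rintro ⟨i, hi⟩
          rw [one_pow, mul_one]
          exact hxg i (by omega)
        · rintro ⟨j, hj⟩
          have hc := hxy 0 1 (by omega) (by omega) (by omega)
          -- hc : x0 * y1 = x1 * y0
          have hratio : y ⟨1, by omega⟩ / y ⟨0, by omega⟩ = x ⟨1, by omega⟩ / x ⟨0, by omega⟩ := by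
            rw [div_eq_div_iff hy0 hx0]
            linear_combination hc
          rw [one_pow, mul_one]
          rw [show y (⟨j, hj⟩ : Fin (l+1)) = y ⟨j, by omega⟩ from rfl, hyg j (by omega), hratio]
      · -- x geometric, y vanishes below l
        by_cases hyl : y ⟨l, by omega⟩ = 0
        · refine ⟨x ⟨0, by omega⟩, 0, 1, x ⟨1, by omega⟩ / x ⟨0, by omega⟩, by simp, ?_, ?_⟩
          · rintro ⟨i, hi⟩
            rw [one_pow, mul_one]
            exact hxg i (by omega)
          · rintro ⟨j, hj⟩
            rw [zero_mul, zero_mul]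
            rcases Nat.lt_or_ge j l with hjl | hjl
            · exact hyz j hjl
            · have : j = l := by omega
              subst this
              exact hyl
        · exfalso
          have hc := hxy 0 l (by omega) (by omega) (by omega)
          have h1 : y ⟨l-1, by omega⟩ = 0 := hyz (l-1) (by omega)
          rw [h1, mul_zero] at hc
          exact hx0 (by
            rcases mul_eq_zero.mp hc with h | h
            · exact h
            · exact absurd h hyl)
    · rcases seqlem l hl y hyy with ⟨hy0, hyg⟩ | hyz
      · -- y geometric, x vanishes below k
        by_cases hxk : x ⟨k, by omega⟩ = 0
        · refine ⟨0, y ⟨0, by omega⟩, 1, y ⟨1, by omega⟩ / y ⟨0, by omega⟩, by simp, ?_, ?_⟩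
          · rintro ⟨i, hi⟩
            rw [zero_mul, zero_mul]
            rcases Nat.lt_or_ge i k with hik | hik
            · exact hxz i hik
            · have : i = k := by omega
              subst this
              exact hxk
          · rintro ⟨j, hj⟩
            rw [one_pow, mul_one]
            exact hyg j (by omega)
        · exfalso
          have hc := hxy (k-1) 1 (by omega) (by omega) (by omega)
          have h1 : x ⟨k-1, by omega⟩ = 0 := hxz (k-1) (by omega)
          have hk1 : x ⟨k-1+1, by omega⟩ = x ⟨k, by omega⟩ := by
            congr 1
            exact Fin.ext (by simp; omega)
          rw [h1, zero_mul, hk1] at hc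
          have hy00 : y ⟨1-1, by omega⟩ = y ⟨0, by omega⟩ := rfl
          rw [hy00] at hc
          rcases mul_eq_zero.mp hc.symm with h | h
          · exact hxk h
          · exact hy0 h
      · -- both vanish below top: take t₀ = 0, t₁ = 1
        refine ⟨x ⟨k, by omega⟩, y ⟨l, by omega⟩, 0, 1, by simp, ?_, ?_⟩
        · rintro ⟨i, hi⟩
          rw [one_pow, mul_one]
          rcases Nat.lt_or_ge i k with hik | hik
          · rw [hxz i hik, zero_pow (by omega : k - i ≠ 0), mul_zero]
          · have : i = k := by omega
            subst this
            simp
        · rintro ⟨j, hj⟩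
          rw [one_pow, mul_one]
          rcases Nat.lt_or_ge j l with hjl | hjl
          · rw [hyz j hjl, zero_pow (by omega : l - j ≠ 0), mul_zero]
          · have : j = l := by omega
            subst this
            simp
  · rintro ⟨α, β, t₀, t₁, hne, hX, hY⟩
    refine ⟨?_, ?_, ?_⟩
    · intro i j hij hj
      rw [hX ⟨i, by omega⟩, hX ⟨j, by omega⟩, hX ⟨i+1, by omega⟩, hX ⟨j-1, by omega⟩]
      exact quadlem α α t₀ t₁ k k i j (by omega) (by omega) (by omega)
    · intro i j hij hj
      rw [hY ⟨i, by omega⟩, hY ⟨j, by omega⟩, hY ⟨i+1, by omega⟩, hY ⟨j-1, by omega⟩]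
      exact quadlem β β t₀ t₁ l l i j (by omega) (by omega) (by omega)
    · intro i j hi hj0 hj
      rw [hX ⟨i, by omega⟩, hX ⟨i+1, by omega⟩, hY ⟨j, by omega⟩, hY ⟨j-1, by omega⟩]
      exact quadlem α β t₀ t₁ k l i j (by omega) (by omega) (by omega)
end
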